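/- For all integers m ≥ 1 and x ≥ 1, if c′ ∈ C(m+1,x) has its two leftmost bits equal to 00 (Group 1), and c denotes the binary word formed by the m rightmost bits of c′, then c ∈ C(m,x) and g(m+1,x,c′) = g(m,x,c); that is, the shift in codeword indices for Group 1 is ζ₁ = 0. -/

import Mathlib

/-- `noForbidden m x c` says the binary word `c = (c_{m-1}, …, c_0)` contains no contiguous
subword of the form `0 1^y 0` or `1 0^y 1` for any `1 ≤ y ≤ x`. -/
def noForbidden (m x : ℕ) (c : Fin m → Bool) : Prop :=
  ∀ j y : ℕ, 1 ≤ y → y ≤ x → (h : j + y + 1 < m) →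
    ¬ ((∀ k, 1 ≤ k → (hk : k ≤ y) → c ⟨j + k, by omega⟩ = ! c ⟨j, by omega⟩) ∧
        c ⟨j + y + 1, h⟩ = c ⟨j, by omega⟩)

/-- `N(m, x)`: the cardinality of the LOCO code `C(m, x)`. -/
noncomputable def locoN (m x : ℕ) : ℕ := Nat.card {c : Fin m → Bool // noForbidden m x c}

/-- `N(k, x)` extended to integer `k` by the convention `N(k, x) = 2` for `k ≤ 1`. -/
noncomputable def Nex (k : ℤ) (x : ℕ) : ℤ := if k ≤ 1 then 2 else (locoN k.toNat x : ℤ)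

/-- Strict lexicographic order on binary words, comparing bits from `c_{m-1}`
(most significant) down to `c_0`, with `0 < 1`. -/
def lexLt (m : ℕ) (d c : Fin m → Bool) : Prop :=
  ∃ i : Fin m, d i = false ∧ c i = true ∧ ∀ j : Fin m, (i : ℕ) < (j : ℕ) → d j = c j

/-- The index `g(m, x, c)` of a codeword: the number of codewords of `C(m, x)` that
precede `c` in lexicographic order. -/
noncomputable def locoIdx (m x : ℕ) (c : Fin m → Bool) : ℕ :=
  Nat.card {d : Fin m → Bool // noForbidden m x d ∧ lexLt m d c}

/-!
Bit `c_{m-1}`, the leftmost one, is `Fin.last`, so prepending a bit on the left is `Fin.snoc`.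
Every word below `c' = 0c` starts with `0`, so deleting that bit maps the codewords below `c'`
onto words below `c`. The map is a bijection onto the codewords below `c`: prepending `0` to a
codeword `d < c` cannot create a forbidden pattern: one ending in the new `0` is `0 1^y 0`, so
it would need `d` to start with `1`, whereas `c`, and hence `d`, starts with `0`.
-/

theorem noForbidden.init {m x : ℕ} {d : Fin (m + 1) → Bool} (hd : noForbidden (m + 1) x d) :
    noForbidden m x (Fin.init d) :=
  fun j y hy hyx h hpat => hd j y hy hyx (by omega) hpat

theorem noForbidden.snoc_false {n x : ℕ} {d : Fin (n + 1) → Bool} (hd : noForbidden (n + 1) x d)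
    (hlast : d (Fin.last n) = false) : noForbidden (n + 2) x (Fin.snoc d false) := by
  intro j y hy hyx h ⟨hflip, hend⟩
  have snoc_val : ∀ k (hk : k < n + 1),
      (Fin.snoc d false : Fin (n + 2) → Bool) ⟨k, by omega⟩ = d ⟨k, hk⟩ :=
    fun k hk => Fin.snoc_castSucc (i := ⟨k, hk⟩) ..
  rcases Nat.lt_or_ge (j + y + 1) (n + 1) with hinside | hatTop
  · refine hd j y hy hyx hinside ⟨fun k hk hky => ?_, ?_⟩
    · rw [← snoc_val _ (by omega), ← snoc_val _ (by omega)]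
      exact hflip k hk hky
    · rw [← snoc_val _ (by omega), ← snoc_val _ (by omega)]
      exact hend
  · have hj : d ⟨j, by omega⟩ = false := by
      rw [← snoc_val, ← hend, show (⟨j + y + 1, h⟩ : Fin (n + 2)) = Fin.last (n + 1) from
        Fin.ext (by simp only [Fin.val_last]; omega)]
      exact Fin.snoc_last (α := fun _ => Bool) ..
    have hflipTop := hflip y hy le_rfl
    rw [snoc_val _ (by omega), snoc_val _ (by omega), hj,
      show (⟨j + y, _⟩ : Fin (n + 1)) = Fin.last n from
        Fin.ext (by simp only [Fin.val_last]; omega), hlast] at hflipTop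
    exact Bool.false_ne_true hflipTop

theorem lexLt_snoc_iff {n : ℕ} {d c : Fin n → Bool} {b : Bool} :
    lexLt (n + 1) (Fin.snoc d b) (Fin.snoc c b) ↔ lexLt n d c := by
  constructor
  · rintro ⟨i, hdi, hci, habove⟩
    induction i using Fin.lastCases with
    | last => simp_all only [Fin.snoc_last, Bool.false_eq_true]
    | cast i =>
      refine ⟨i, by simpa using hdi, by simpa using hci, fun j hj => ?_⟩
      simpa using habove j.castSucc hj
  · rintro ⟨i, hdi, hci, habove⟩
    refine ⟨i.castSucc, by simpa using hdi, by simpa using hci, fun j hj => ?_⟩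
    induction j using Fin.lastCases with
    | last => simp
    | cast j => simpa using habove j hj

theorem lexLt.last_eq_false {n : ℕ} {d c : Fin (n + 1) → Bool} (h : lexLt (n + 1) d c)
    (hc : c (Fin.last n) = false) : d (Fin.last n) = false := by
  obtain ⟨i, -, hci, habove⟩ := h
  rcases Fin.eq_castSucc_or_eq_last i with ⟨i, rfl⟩ | rfl
  · rw [habove _ (Fin.castSucc_lt_last i), hc]
  · simp_all

theorem Fin.snoc_init_of_last_eq {n : ℕ} {α : Sort*} {d : Fin (n + 1) → α} {b : α}
    (h : d (Fin.last n) = b) : Fin.snoc (Fin.init d) b = d :=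
  h ▸ Fin.snoc_init_self d

theorem locoIdx_snoc_false {n x : ℕ} {c : Fin (n + 1) → Bool} (hc : c (Fin.last n) = false) :
    locoIdx (n + 2) x (Fin.snoc c false) = locoIdx (n + 1) x c := by
  have snoc_init : ∀ d : Fin (n + 2) → Bool, lexLt (n + 2) d (Fin.snoc c false) →
      Fin.snoc (Fin.init d) false = d :=
    fun d hd => Fin.snoc_init_of_last_eq (hd.last_eq_false (Fin.snoc_last (α := fun _ => Bool) ..))
  exact Nat.card_congr
    { toFun := fun d => ⟨Fin.init d.1, d.2.1.init,
        lexLt_snoc_iff.1 ((snoc_init d.1 d.2.2).symm ▸ d.2.2)⟩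
      invFun := fun d => ⟨Fin.snoc d.1 false, d.2.1.snoc_false (d.2.2.last_eq_false hc),
        lexLt_snoc_iff.2 d.2.2⟩
      left_inv := fun d => Subtype.ext (snoc_init d.1 d.2.2)
      right_inv := fun d => Subtype.ext (Fin.init_snoc (α := fun _ => Bool) ..) }

theorem loco_group1_shift (m x : ℕ) (hm : 1 ≤ m)
    (c' : Fin (m + 1) → Bool) (hc' : noForbidden (m + 1) x c')
    (h1 : c' ⟨m, by omega⟩ = false) (h2 : c' ⟨m - 1, by omega⟩ = false) :
    noForbidden m x (fun i => c' (Fin.castSucc i)) ∧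
    locoIdx (m + 1) x c' = locoIdx m x (fun i => c' (Fin.castSucc i)) := by
  refine ⟨hc'.init, ?_⟩
  obtain ⟨n, rfl⟩ : ∃ n, m = n + 1 := ⟨m - 1, by omega⟩
  calc locoIdx (n + 2) x c'
      = locoIdx (n + 2) x (Fin.snoc (Fin.init c') false) := by
        rw [Fin.snoc_init_of_last_eq h1]
    _ = locoIdx (n + 1) x (Fin.init c') := locoIdx_snoc_false h2
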